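/- Let G be an abelian group, p ∈ G with p ≠ 1, and M a subgroup of G with p ∉ M such that for every x ∉ M, p lies in the subgroup generated by M and x. Then the index of M in G is countable. -/

import Mathlib

/-!
In `G ⧸ M` the image of `p` is a nonzero element lying in the cyclic subgroup generated by every
nonzero element. A character `G ⧸ M →+ ℚ/ℤ` not vanishing at it therefore has trivial kernel, so
`G ⧸ M` embeds into the countable group `ℚ/ℤ`.
-/

open AddSubgroup

theorem QuotientAddGroup.mk_mem_zmultiples_of_mem_sup_closure {G : Type*} [AddCommGroup G]
    {M : AddSubgroup G} {p x : G} (h : p ∈ M ⊔ closure {x}) :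
    (p : G ⧸ M) ∈ zmultiples (x : G ⧸ M) := by
  have hM : M.map (QuotientAddGroup.mk' M) = ⊥ :=
    (AddSubgroup.map_eq_bot_iff _).2 (QuotientAddGroup.ker_mk' M).ge
  have := mem_map_of_mem (QuotientAddGroup.mk' M) h
  rwa [AddSubgroup.map_sup, hM, bot_sup_eq, AddMonoidHom.map_closure, Set.image_singleton,
    ← zmultiples_eq_closure] at this

theorem AddMonoidHom.injective_of_apply_ne_zero_of_mem_zmultiples {A B : Type*}
    [AddCommGroup A] [AddCommGroup B] (f : A →+ B) {a : A} (hfa : f a ≠ 0)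
    (h : ∀ x : A, x ≠ 0 → a ∈ zmultiples x) : Function.Injective f := by
  refine (injective_iff_map_eq_zero f).2 fun x hx => ?_
  by_contra hx0
  obtain ⟨n, rfl⟩ := h x hx0
  exact hfa (by rw [map_zsmul, hx, smul_zero])

theorem countable_of_forall_mem_zmultiples {A : Type*} [AddCommGroup A] {a : A} (ha : a ≠ 0)
    (h : ∀ x : A, x ≠ 0 → a ∈ zmultiples x) : Countable A := by
  obtain ⟨c, hc⟩ := CharacterModule.exists_character_apply_ne_zero_of_ne_zero ha
  have : Countable (AddCircle (1 : ℚ)) := Quotient.countable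
  exact (c.injective_of_apply_ne_zero_of_mem_zmultiples hc h).countable

theorem stmt_4_general {G : Type*} [AddCommGroup G] (p : G) (M : AddSubgroup G)
    (hpM : p ∉ M) (hmax : ∀ x : G, x ∉ M → p ∈ M ⊔ AddSubgroup.closure {x}) :
    Countable (G ⧸ M) := by
  refine countable_of_forall_mem_zmultiples (a := (p : G ⧸ M))
    (mt (QuotientAddGroup.eq_zero_iff p).1 hpM) fun x hx => ?_
  induction x using QuotientAddGroup.induction_on with
  | H g =>
    exact QuotientAddGroup.mk_mem_zmultiples_of_mem_sup_closure
      (hmax g (mt (QuotientAddGroup.eq_zero_iff g).2 hx))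

theorem stmt_4 {G : Type*} [AddCommGroup G] (p : G) (hp : p ≠ 0) (M : AddSubgroup G)
    (hpM : p ∉ M) (hmax : ∀ x : G, x ∉ M → p ∈ M ⊔ AddSubgroup.closure {x}) :
    Countable (G ⧸ M) :=
  stmt_4_general p M hpM hmax
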